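/- For all A_1,A_2∈MU(R), B∈BIMU(R) and every nonempty sequence w over G×H, gaxit(A_1,A_2)(B)(w) = Σ_{t≥1} Σ B(⌈a_1⌉x_1⌈c_1⌉⋯⌈a_t⌉x_t⌈c_t⌉)·∏_{j=1}^{t} A_1(a_j⌊x_j⌋)·A_2(⌊x_j⌋c_j), where the inner sum runs over all factorizations w=a_1x_1c_1⋯a_tx_tc_t into consecutive blocks in which each x_j is a single letter of w and the blocks a_j,c_j are allowed to be empty. -/

import Mathlib

namespace Flexion

variable {R : Type*} [CommRing R] [Algebra ℚ R]
variable {G H : Type*} [AddCommGroup G] [AddCommGroup H]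

/-- A bimould over `R` with letters in `G × H`, given by its values on all
finite sequences of letters. -/
abbrev Mould (R G H : Type*) := List (G × H) → R

/-- The unit bimould `1`: value `1` on the empty sequence, `0` elsewhere. -/
def muOne : Mould R G H := fun w => match w with | [] => 1 | _ => 0

/-- The uninflected product `mmu`. -/
def mmu (A B : Mould R G H) : Mould R G H := fun w =>
  ∑ i ∈ Finset.range (w.length + 1), A (w.take i) * B (w.drop i)

/-- `n`-fold `mmu`-power. -/
def mmuPow (A : Mould R G H) : ℕ → Mould R G H
  | 0 => muOne
  | n + 1 => mmu A (mmuPow A n)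

/-- The operator `neg`. -/
def neg (A : Mould R G H) : Mould R G H := fun w => A (w.map fun p => (-p.1, -p.2))

/-- The operator `anti`. -/
def anti (A : Mould R G H) : Mould R G H := fun w => A w.reverse

/-- The operator `pari`. -/
def pari (A : Mould R G H) : Mould R G H := fun w => (-1 : R) ^ w.length * A w

/-- The operator `mantar`; note `(-1)^(r-1) = -(-1)^r`. -/
def mantar (A : Mould R G H) : Mould R G H := fun w => -((-1 : R) ^ w.length * A w.reverse)

/-- The `v`-component of the last letter (0 for the empty sequence). -/
def lastV : List (G × H) → H
  | [] => 0
  | [p] => p.2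
  | _ :: p :: ps => lastV (p :: ps)

/-- The `v`-component of the first letter (0 for the empty sequence). -/
def headV : List (G × H) → H
  | [] => 0
  | p :: _ => p.2

/-- Sum of the `u`-components. -/
def uSum (w : List (G × H)) : G := (w.map Prod.fst).sum

/-- The operator `push`. -/
def push (A : Mould R G H) : Mould R G H := fun w =>
  match w with
  | [] => A []
  | x :: xs =>
      A ((-uSum (x :: xs), -lastV (x :: xs)) ::
          ((x :: xs).dropLast.map fun p => (p.1, p.2 - lastV (x :: xs))))

/-- The operator `swap`. -/
def swap (A : Mould R G H) : Mould R H G := fun w =>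
  A (List.ofFn fun j : Fin w.length =>
      (headV (w.drop (w.length - 1 - (j : ℕ))) - headV (w.drop (w.length - (j : ℕ))),
       uSum (w.take (w.length - (j : ℕ)))))

/-- Auxiliary fuelled definition of the `mmu`-inverse. -/
def invmuAux (A : Mould R G H) : ℕ → Mould R G H
  | 0 => fun w => match w with | [] => 1 | _ => 0
  | n + 1 => fun w =>
      match w with
      | [] => 1
      | x :: xs =>
          -∑ i ∈ Finset.range (xs.length + 1),
            A ((x :: xs).take (i + 1)) * invmuAux A n (xs.drop i)

/-- The `mmu`-inverse of a bimould of `MU(R)` (value `1` at the empty sequence). -/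
def invmu (A : Mould R G H) : Mould R G H := fun w => invmuAux A w.length w

/-- `gantar := invmu ∘ pari ∘ anti`. -/
def gantar (A : Mould R G H) : Mould R G H := invmu (pari (anti A))

/-- The flexion marker `⌈a⌉b`. -/
def flexUL (a b : List (G × H)) : List (G × H) :=
  match b with
  | [] => []
  | p :: bs => (uSum a + p.1, p.2) :: bs

/-- The flexion marker `a⌈b⌉`. -/
def flexUR : List (G × H) → List (G × H) → List (G × H)
  | [], _ => []
  | [p], b => [(p.1 + uSum b, p.2)]
  | p :: q :: ps, b => p :: flexUR (q :: ps) b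

/-- The flexion marker `⌊a⌋b`. -/
def flexLL (a b : List (G × H)) : List (G × H) :=
  b.map fun p => (p.1, p.2 - lastV a)

/-- The flexion marker `a⌊b⌋`. -/
def flexLR (a b : List (G × H)) : List (G × H) :=
  a.map fun p => (p.1, p.2 - headV b)

/-- All factorizations `w = a₁b₁c₁⋯a_sb_sc_s` into (possibly empty) consecutive
blocks with every `b_i ≠ ∅` and `c_i a_{i+1} ≠ ∅` for `1 ≤ i ≤ s-1`; the flag
records whether the first block `a₁` may be empty. -/
def facs {α : Type*} : Bool → List α → List (List (List α × List α × List α))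
  | _, [] => [[]]
  | aFree, x :: xs =>
    (List.range ((x :: xs).length + 1)).flatMap fun i =>
      if i = 0 ∧ aFree = false then []
      else
        (List.range (((x :: xs).drop i).length)).flatMap fun j =>
          (List.range ((((x :: xs).drop i).drop (j + 1)).length + 1)).flatMap fun k =>
            (facs (!((((x :: xs).drop i).drop (j + 1)).take k).isEmpty)
                ((((x :: xs).drop i).drop (j + 1)).drop k)).map
              (fun L =>
                ((x :: xs).take i,
                 ((x :: xs).drop i).take (j + 1),
                 (((x :: xs).drop i).drop (j + 1)).take k) :: L)
  termination_by _ w => w.length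
  decreasing_by
    simp only [List.length_drop, List.length_cons]
    omega

/-- The block `⌈a⌉b⌈c⌉` attached to a factorization triple `(a, b, c)`. -/
def blockArg (t : List (G × H) × List (G × H) × List (G × H)) : List (G × H) :=
  flexUL t.1 (flexUR t.2.1 t.2.2)

/-- The operator `gaxit(A₁, A₂)`. -/
def gaxit (A₁ A₂ : Mould R G H) (B : Mould R G H) : Mould R G H := fun w =>
  match w with
  | [] => B []
  | x :: xs =>
      ((facs true (x :: xs)).map fun L =>
        B (L.flatMap blockArg) *
          (L.map fun t => A₁ (flexLR t.1 t.2.1) * A₂ (flexLL t.2.1 t.2.2)).prod).sum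

/-- `gamit(A) := gaxit(A, 1)`. -/
def gamit (A : Mould R G H) : Mould R G H → Mould R G H := gaxit A muOne

/-- `ganit(A) := gaxit(1, A)`. -/
def ganit (A : Mould R G H) : Mould R G H → Mould R G H := gaxit muOne A

/-- `garit(B) := gaxit(B, invmu(B))`. -/
def garit (B : Mould R G H) : Mould R G H → Mould R G H := gaxit B (invmu B)

/-- `gari(A, B) := mmu(garit(B)(A), B)`. -/
def gari (A B : Mould R G H) : Mould R G H := mmu (garit B A) B

/-- The `gari`-inverse (via choice; for `B ∈ MU(R)` it is the unique two-sided
`gari`-inverse of `B`). -/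
noncomputable def invgari (B : Mould R G H) : Mould R G H :=
  letI := Classical.propDecidable
  if h : ∃ C : Mould R G H, gari C B = muOne ∧ gari B C = muOne then h.choose else muOne

/-- `gani(A, B) := mmu(B, ganit(B)(A))`. -/
def gani (A B : Mould R G H) : Mould R G H := mmu B (ganit B A)

/-- The `gani`-inverse (via choice). -/
noncomputable def invgani (A : Mould R G H) : Mould R G H :=
  letI := Classical.propDecidable
  if h : ∃ C : Mould R G H, gani C A = muOne ∧ gani A C = muOne then h.choose else muOne

/-- The pair operation `gaxi`. -/
def gaxi (p q : Mould R G H × Mould R G H) : Mould R G H × Mould R G H :=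
  (mmu (gaxit q.1 q.2 p.1) q.1, mmu q.2 (gaxit q.1 q.2 p.2))

/-- The operator `amit(X)`. -/
def amit (X : Mould R G H) (B : Mould R G H) : Mould R G H := fun w =>
  ∑ i ∈ Finset.range (w.length + 1), ∑ j ∈ Finset.range (w.length + 1),
    if i < j ∧ j < w.length then
      X (w.take i ++ flexUL ((w.drop i).take (j - i)) (w.drop j)) *
        B (flexLR ((w.drop i).take (j - i)) (w.drop j))
    else 0

/-- The operator `anit(X)`. -/
def anit (X : Mould R G H) (B : Mould R G H) : Mould R G H := fun w =>
  ∑ i ∈ Finset.range (w.length + 1), ∑ j ∈ Finset.range (w.length + 1),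
    if 0 < i ∧ i < j then
      X (flexUR (w.take i) ((w.drop i).take (j - i)) ++ w.drop j) *
        B (flexLL (w.take i) ((w.drop i).take (j - i)))
    else 0

/-- `arit(X) := amit(X) - anit(X)`. -/
def arit (X : Mould R G H) (B : Mould R G H) : Mould R G H := fun w =>
  amit X B w - anit X B w

/-- `preari(A, B) := arit(B)(A) + mmu(A, B)`. -/
def preari (A B : Mould R G H) : Mould R G H := fun w => arit B A w + mmu A B w

/-- `ari(A, B) := preari(A, B) - preari(B, A)`. -/
def ari (A B : Mould R G H) : Mould R G H := fun w => preari A B w - preari B A w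

/-- Left-nested `preari`-powers: `preari(A, A, …, A)` (`n` arguments). -/
def preariPow (A : Mould R G H) : ℕ → Mould R G H
  | 0 => muOne
  | 1 => A
  | n + 2 => preari (preariPow A (n + 1)) A

/-- `expari(A) = 1 + Σ_{n≥1} preari(A,…,A)/n!`; the sum is computed pointwise,
using that the `n`-th term vanishes in lengths `< n`. -/
def expari (A : Mould R G H) : Mould R G H := fun w =>
  ∑ n ∈ Finset.range (w.length + 1), (n.factorial : ℚ)⁻¹ • preariPow A n w

/-- The bimoulds `fre_r`: `fre_1 := E`, `fre_{r+1} := arit(fre_r)(E)`. -/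
def fre (E : Mould R G H) : ℕ → Mould R G H
  | 0 => fun _ => 0
  | 1 => E
  | n + 2 => arit (fre E (n + 1)) E

/-- Flexion units. -/
structure IsFlexionUnit (E : Mould R G H) : Prop where
  empty : E [] = 0
  support : ∀ w : List (G × H), 2 ≤ w.length → E w = 0
  parity : ∀ (u : G) (v : H), E [(-u, -v)] = -E [(u, v)]
  tripartite : ∀ (u₁ u₂ : G) (v₁ v₂ : H),
    E [(u₁, v₁)] * E [(u₂, v₂)] =
      E [(u₁, v₁ - v₂)] * E [(u₁ + u₂, v₂)] + E [(u₁ + u₂, v₁)] * E [(u₂, v₂ - v₁)]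

/-- A bimould `M` is push-neutral if `(id + push + ⋯ + push^{∘r})(M)` vanishes
in each length `r`. -/
def PushNeutral (M : Mould R G H) : Prop :=
  ∀ w : List (G × H), ∑ i ∈ Finset.range (w.length + 1), push^[i] M w = 0

/-- `fez := invmu(1 - E)`. -/
def fez (E : Mould R G H) : Mould R G H := invmu (muOne - E)

/-- The bimould `fes`, by its explicit formula
`fes(u₁,…,u_r; v₁,…,v_r) = ∏ᵢ E(u₁+⋯+uᵢ; vᵢ − v_{i+1})` with `v_{r+1} := 0`. -/
def fesExpl (E : Mould R G H) : Mould R G H := fun w =>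
  ∏ i ∈ Finset.range w.length,
    E [(uSum (w.take (i + 1)), headV (w.drop i) - headV (w.drop (i + 1)))]

/-- All shuffles of two sequences (with multiplicity). -/
def shuffles {α : Type*} : List α → List α → List (List α)
  | [], w => [w]
  | x :: xs, [] => [x :: xs]
  | x :: xs, y :: ys =>
      ((shuffles xs (y :: ys)).map (x :: ·)) ++ ((shuffles (x :: xs) ys).map (y :: ·))
  termination_by a b => a.length + b.length
  decreasing_by
    · simp only [List.length_cons]; omega
    · simp only [List.length_cons]; omega

/-- Symmetrality. -/
def Symmetral (A : Mould R G H) : Prop :=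
  ∀ w w' : List (G × H), w ≠ [] → w' ≠ [] →
    ((shuffles w w').map A).sum = A w * A w'

/-- Alternality. -/
def Alternal (A : Mould R G H) : Prop :=
  ∀ w w' : List (G × H), w ≠ [] → w' ≠ [] →
    ((shuffles w w').map A).sum = 0

/-- `gepar(A) := mmu(anti(swap(A)), swap(A))`. -/
def gepar (A : Mould R G H) : Mould R H G := mmu (anti (swap A)) (swap A)

/-- `der`: multiplication by the length. -/
def der (A : Mould R G H) : Mould R G H := fun w => (w.length : R) * A w

/-- `slash(A) := gari(neg(A), invgari(A))`. -/
noncomputable def slash (A : Mould R G H) : Mould R G H := gari (neg A) (invgari A)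

/-- `crash(B) := mmu((push∘swap∘invmu∘invgari∘swap)(B), (swap∘invgari∘swap)(B))`. -/
noncomputable def crash (B : Mould R G H) : Mould R G H :=
  mmu (push (swap (invmu (invgari (swap B))))) (swap (invgari (swap B)))

/-- Formal derivative of a power series. -/
noncomputable def psDeriv (g : PowerSeries R) : PowerSeries R :=
  PowerSeries.mk fun m => ((m + 1 : ℕ) : R) * PowerSeries.coeff (m + 1) g

/-- `f_*(x) = Σ_{r≥1} ε_r x^{r+1}`. -/
noncomputable def fstarPS (ε : ℕ → R) : PowerSeries R :=
  PowerSeries.mk fun m => if 2 ≤ m then ε (m - 1) else 0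

/-- `exp(f_*(x) d/dx)(x)`, computed coefficientwise (only finitely many terms
contribute to each coefficient, since `f_* ∈ x²R[[x]]`). -/
noncomputable def expDX (ε : ℕ → R) : PowerSeries R :=
  PowerSeries.mk fun m =>
    ∑ n ∈ Finset.range (m + 1),
      (n.factorial : ℚ)⁻¹ •
        PowerSeries.coeff m ((fun g => fstarPS ε * psDeriv g)^[n] PowerSeries.X)

/-- `ε` is the family of coefficients of the infinitesimal generator of
`f ∈ GIFF_x(R)`. -/
noncomputable def IsGenerator (ε : ℕ → R) (f : PowerSeries R) : Prop :=
  expDX ε = f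

/-- The mould `Σ_{r≥1} ε_r · fre_r` associated to a flexion unit `E` and a
coefficient family `ε`. -/
def freSum (E : Mould R G H) (ε : ℕ → R) : Mould R G H :=
  fun w => ε w.length * fre E w.length w

/-- `Se(f) := expari(Σ_{r≥1} ε_r^f · fre_r)` where `ε^f` is the family of
coefficients of the infinitesimal generator of `f`. -/
def SeGen (E : Mould R G H) (ε : ℕ → R) : Mould R G H := expari (freSum E ε)

/-- The power series `re(x) = 1 - exp(-x)`. -/
noncomputable def rePS (R : Type*) [CommRing R] [Algebra ℚ R] : PowerSeries R :=
  PowerSeries.mk fun m =>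
    if m = 0 then 0 else algebraMap ℚ R ((-1 : ℚ) ^ (m + 1) / m.factorial)


/-- All factorizations `w = a₁x₁c₁⋯a_tx_tc_t` into consecutive blocks in which
every `x_j` is a single letter and the blocks `a_j, c_j` may be empty. -/
def sfacs {α : Type*} : List α → List (List (List α × α × List α))
  | [] => [[]]
  | x :: xs =>
      (List.range (xs.length + 1)).flatMap fun i =>
        (List.range (((x :: xs).drop (i + 1)).length + 1)).flatMap fun k =>
          (sfacs (((x :: xs).drop (i + 1)).drop k)).map fun L =>
            ((x :: xs).take i, (x :: xs).getD i x, ((x :: xs).drop (i + 1)).take k) :: L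
  termination_by w => w.length
  decreasing_by
    simp only [List.length_drop, List.length_cons]
    omega

/-- The inverse of a bijection of `BIMU(R)`. -/
noncomputable def minv (g : Mould R G H → Mould R G H) : Mould R G H → Mould R G H :=
  @Function.invFun (Mould R G H) (Mould R G H) ⟨fun _ => 0⟩ g

/-- Membership of a pair of bimoulds in `MU(R) × MU(R)`. -/
def MUpair (p : Mould R G H × Mould R G H) : Prop := p.1 [] = 1 ∧ p.2 [] = 1

end Flexion

/-!
Cutting every block `(a, y₁⋯yₘ, c)` of a `gaxit` factorization into the single-letter triples
`(a, y₁, ∅) (∅, y₂, ∅) ⋯ (∅, yₘ, c)` changes neither the argument of `B` nor, since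
`A₁(∅) = A₂(∅) = 1`, the coefficient; the condition `cᵢaᵢ₊₁ ≠ ∅` says exactly that every
single-letter factorization arises from one `gaxit` factorization in this way. Instead of
constructing this bijection we show that both sums satisfy the same recursion in the first
triple. On the `gaxit` side, removing the first letter `y` of a block of length at least two
leaves a block with empty `a`, and the terms whose first block has empty `a` are the
difference of the sums over `facs true` and `facs false`; this difference recombines with the
terms where `y` is a block by itself and `c = ∅`.
-/

namespace Flexion

variable {R G H : Type*} [CommRing R]

private lemma sum_map_flatMap {α β : Type*} (l : List α) (f : α → List β) (g : β → R) :
    ((l.flatMap f).map g).sum = (l.map fun a => ((f a).map g).sum).sum := by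
  rw [List.flatMap_def, List.map_flatten, List.sum_flatten, List.map_map, List.map_map]
  rfl

private lemma take_succ_ne_nil {α : Type*} {l : List α} {k : ℕ} (hk : k < l.length) :
    l.take (k + 1) ≠ [] := by
  simpa using List.ne_nil_of_length_pos (by omega : 0 < l.length)

private lemma sum_map_range (n : ℕ) (f : ℕ → R) :
    ((List.range n).map f).sum = ∑ i ∈ Finset.range n, f i := rfl

section
variable [AddCommGroup G]

lemma flexUL_nil (b : List (G × H)) : flexUL [] b = b := by
  cases b <;> simp [flexUL, uSum]

lemma flexUR_cons_of_ne_nil (y : G × H) {b : List (G × H)} (hb : b ≠ []) (c : List (G × H)) :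
    flexUR (y :: b) c = y :: flexUR b c := by
  obtain ⟨p, ps, rfl⟩ := List.exists_cons_of_ne_nil hb
  rfl

def letterArg (t : List (G × H) × (G × H) × List (G × H)) : G × H :=
  (uSum t.1 + t.2.1.1 + uSum t.2.2, t.2.1.2)

lemma blockArg_singleton (a : List (G × H)) (y : G × H) (c : List (G × H)) :
    blockArg (a, [y], c) = [letterArg (a, y, c)] := by
  simp [blockArg, flexUL, flexUR, letterArg, add_assoc]

end

section
variable [AddCommGroup H] (A₁ A₂ : Mould R G H)

lemma flexLL_cons_of_ne_nil (y : G × H) {b : List (G × H)} (hb : b ≠ []) (c : List (G × H)) :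
    flexLL (y :: b) c = flexLL b c := by
  obtain ⟨p, ps, rfl⟩ := List.exists_cons_of_ne_nil hb
  rfl

def blockCoeff (t : List (G × H) × List (G × H) × List (G × H)) : R :=
  A₁ (flexLR t.1 t.2.1) * A₂ (flexLL t.2.1 t.2.2)

def letterCoeff (t : List (G × H) × (G × H) × List (G × H)) : R :=
  A₁ (t.1.map fun p => (p.1, p.2 - t.2.1.2)) * A₂ (t.2.2.map fun p => (p.1, p.2 - t.2.1.2))

lemma blockCoeff_singleton (a : List (G × H)) (y : G × H) (c : List (G × H)) :
    blockCoeff A₁ A₂ (a, [y], c) = letterCoeff A₁ A₂ (a, y, c) := rfl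

end

variable [AddCommGroup G] [AddCommGroup H] (A₁ A₂ : Mould R G H)

/-- The `gaxit` sum over `facs f w`, with `B` replaced by an arbitrary `Φ` so that the tail
of a factorization can be summed with `Φ` shifted by the blocks already chosen. -/
def facsSum (f : Bool) (Φ : Mould R G H) (w : List (G × H)) : R :=
  ((facs f w).map fun L => Φ (L.flatMap blockArg) * (L.map (blockCoeff A₁ A₂)).prod).sum

def sfacsSum (Φ : Mould R G H) (w : List (G × H)) : R :=
  ((sfacs w).map fun L => Φ (L.map letterArg) * (L.map (letterCoeff A₁ A₂)).prod).sum

def blockTerm (a b c rest : List (G × H)) (Φ : Mould R G H) : R :=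
  blockCoeff A₁ A₂ (a, b, c) *
    facsSum A₁ A₂ (!c.isEmpty) (fun l => Φ (blockArg (a, b, c) ++ l)) rest

def firstBlockSum (a u : List (G × H)) (Φ : Mould R G H) : R :=
  ∑ j ∈ Finset.range u.length, ∑ k ∈ Finset.range ((u.drop (j + 1)).length + 1),
    blockTerm A₁ A₂ a (u.take (j + 1)) ((u.drop (j + 1)).take k) ((u.drop (j + 1)).drop k) Φ

def firstLetterSum (T : Mould R G H → List (G × H) → R) (a : List (G × H)) (y : G × H)
    (r : List (G × H)) (Φ : Mould R G H) : R :=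
  ∑ k ∈ Finset.range (r.length + 1),
    letterCoeff A₁ A₂ (a, y, r.take k) * T (fun l => Φ (letterArg (a, y, r.take k) :: l)) (r.drop k)

lemma facsSum_nil (f : Bool) (Φ : Mould R G H) : facsSum A₁ A₂ f Φ [] = Φ [] := by
  simp [facsSum, facs]

lemma facsSum_cons (f : Bool) (Φ : Mould R G H) (x : G × H) (xs : List (G × H)) :
    facsSum A₁ A₂ f Φ (x :: xs) =
      ∑ i ∈ Finset.range ((x :: xs).length + 1),
        if i = 0 ∧ f = false then 0
        else firstBlockSum A₁ A₂ ((x :: xs).take i) ((x :: xs).drop i) Φ := by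
  rw [facsSum, facs, sum_map_flatMap, sum_map_range]
  refine Finset.sum_congr rfl fun i _ => ?_
  split_ifs
  · simp
  rw [sum_map_flatMap, sum_map_range]
  refine Finset.sum_congr rfl fun j _ => ?_
  rw [sum_map_flatMap, sum_map_range]
  refine Finset.sum_congr rfl fun k _ => ?_
  simp only [List.map_map, Function.comp_def, List.flatMap_cons, List.map_cons, List.prod_cons]
  rw [blockTerm, facsSum, ← List.sum_map_mul_left]
  congr 1
  refine List.map_congr_left fun L _ => ?_
  ring

lemma facsSum_true_sub_false (Φ : Mould R G H) (u : List (G × H)) :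
    facsSum A₁ A₂ true Φ u - facsSum A₁ A₂ false Φ u = firstBlockSum A₁ A₂ [] u Φ := by
  cases u with
  | nil => simp [facsSum_nil, firstBlockSum]
  | cons x xs =>
    rw [facsSum_cons, facsSum_cons, Finset.sum_range_succ', Finset.sum_range_succ']
    simp

variable {A₁ A₂}

lemma blockTerm_singleton (a : List (G × H)) (y : G × H) (c rest : List (G × H))
    (Φ : Mould R G H) :
    blockTerm A₁ A₂ a [y] c rest Φ =
      letterCoeff A₁ A₂ (a, y, c) *
        facsSum A₁ A₂ (!c.isEmpty) (fun l => Φ (letterArg (a, y, c) :: l)) rest := by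
  rw [blockTerm, blockCoeff_singleton, blockArg_singleton]
  rfl

/-- A block `y :: b` with `b ≠ []` is the letter `y` followed by the block `b` with empty `a`. -/
lemma blockTerm_cons (h₁ : A₁ [] = 1) (a : List (G × H)) (y : G × H) {b : List (G × H)}
    (hb : b ≠ []) (c rest : List (G × H)) (Φ : Mould R G H) :
    blockTerm A₁ A₂ a (y :: b) c rest Φ =
      A₁ (a.map fun p => (p.1, p.2 - y.2)) *
        blockTerm A₁ A₂ [] b c rest (fun l => Φ ((uSum a + y.1, y.2) :: l)) := by
  simp only [blockTerm, blockCoeff, blockArg, flexUL_nil, flexUR_cons_of_ne_nil y hb,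
    flexLL_cons_of_ne_nil y hb]
  simp only [flexLR, flexUL, List.cons_append, List.map_nil, h₁, headV]
  ring

lemma firstBlockSum_cons (h₁ : A₁ [] = 1) (h₂ : A₂ [] = 1) (a : List (G × H)) (y : G × H)
    (r : List (G × H)) (Φ : Mould R G H) :
    firstBlockSum A₁ A₂ a (y :: r) Φ = firstLetterSum A₁ A₂ (facsSum A₁ A₂ true) a y r Φ := by
  set Ψ : Mould R G H := fun l => Φ ((uSum a + y.1, y.2) :: l)
  have longBlocks :
      ∑ j ∈ Finset.range r.length, ∑ k ∈ Finset.range ((r.drop (j + 1)).length + 1),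
        blockTerm A₁ A₂ a (y :: r.take (j + 1)) ((r.drop (j + 1)).take k)
          ((r.drop (j + 1)).drop k) Φ =
      A₁ (a.map fun p => (p.1, p.2 - y.2)) * firstBlockSum A₁ A₂ [] r Ψ := by
    rw [firstBlockSum, Finset.mul_sum]
    refine Finset.sum_congr rfl fun j hj => ?_
    rw [Finset.mul_sum]
    exact Finset.sum_congr rfl fun k _ =>
      blockTerm_cons h₁ a y (take_succ_ne_nil (Finset.mem_range.mp hj)) _ _ Φ
  rw [firstBlockSum, List.length_cons, Finset.sum_range_succ']
  simp only [List.take_succ_cons, List.drop_succ_cons, List.take_zero, List.drop_zero]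
  rw [longBlocks, ← facsSum_true_sub_false, Finset.sum_range_succ', firstLetterSum,
    Finset.sum_range_succ']
  simp only [blockTerm_singleton]
  -- the term with `c = ∅` of the single-letter block carries `facsSum false`, and the longer
  -- blocks add `facsSum true - facsSum false` with the same coefficient
  rw [Finset.sum_congr rfl fun k hk => by
    rw [List.isEmpty_eq_false_iff.mpr (take_succ_ne_nil (Finset.mem_range.mp hk))]]
  simp only [letterCoeff, letterArg, List.take_zero, List.drop_zero, List.map_nil, h₂, uSum,
    List.sum_nil, add_zero, List.isEmpty_nil, Bool.not_true, Bool.not_false, Ψ]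
  ring

lemma facsSum_true_cons (h₁ : A₁ [] = 1) (h₂ : A₂ [] = 1) (Φ : Mould R G H) (x : G × H)
    (xs : List (G × H)) :
    facsSum A₁ A₂ true Φ (x :: xs) =
      ∑ i ∈ Finset.range (xs.length + 1),
        firstLetterSum A₁ A₂ (facsSum A₁ A₂ true) ((x :: xs).take i) ((x :: xs).getD i x)
          ((x :: xs).drop (i + 1)) Φ := by
  rw [facsSum_cons, List.length_cons, Finset.sum_range_succ]
  simp only [Bool.true_eq_false, and_false, if_false]
  rw [show (x :: xs).drop (xs.length + 1) = [] by simp, firstBlockSum, List.length_nil,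
    Finset.sum_range_zero, add_zero]
  refine Finset.sum_congr rfl fun i hi => ?_
  have hlt : i < (x :: xs).length := by simpa using Finset.mem_range.mp hi
  rw [List.drop_eq_getElem_cons hlt, ← List.getD_eq_getElem _ x hlt, firstBlockSum_cons h₁ h₂]

variable (A₁ A₂)

lemma sfacsSum_nil (Φ : Mould R G H) : sfacsSum A₁ A₂ Φ [] = Φ [] := by
  simp [sfacsSum, sfacs]

lemma sfacsSum_cons (Φ : Mould R G H) (x : G × H) (xs : List (G × H)) :
    sfacsSum A₁ A₂ Φ (x :: xs) =
      ∑ i ∈ Finset.range (xs.length + 1),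
        firstLetterSum A₁ A₂ (sfacsSum A₁ A₂) ((x :: xs).take i) ((x :: xs).getD i x)
          ((x :: xs).drop (i + 1)) Φ := by
  rw [sfacsSum, sfacs, sum_map_flatMap, sum_map_range]
  refine Finset.sum_congr rfl fun i _ => ?_
  rw [sum_map_flatMap, sum_map_range]
  refine Finset.sum_congr rfl fun k _ => ?_
  simp only [List.map_map, Function.comp_def, List.map_cons, List.prod_cons]
  rw [sfacsSum, ← List.sum_map_mul_left]
  congr 1
  refine List.map_congr_left fun L _ => ?_
  ring

variable {A₁ A₂}

lemma firstLetterSum_congr {T T' : Mould R G H → List (G × H) → R} {r : List (G × H)}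
    (hT : ∀ u : List (G × H), u.length ≤ r.length → ∀ Φ, T Φ u = T' Φ u)
    (a : List (G × H)) (y : G × H) (Φ : Mould R G H) :
    firstLetterSum A₁ A₂ T a y r Φ = firstLetterSum A₁ A₂ T' a y r Φ :=
  Finset.sum_congr rfl fun k _ => by rw [hT _ (by simp)]

theorem facsSum_true_eq_sfacsSum (h₁ : A₁ [] = 1) (h₂ : A₂ [] = 1) (Φ : Mould R G H)
    (w : List (G × H)) : facsSum A₁ A₂ true Φ w = sfacsSum A₁ A₂ Φ w := by
  induction hn : w.length using Nat.strong_induction_on generalizing w Φ with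
  | _ n ih =>
    cases w with
    | nil => rw [facsSum_nil, sfacsSum_nil]
    | cons x xs =>
      rw [facsSum_true_cons h₁ h₂, sfacsSum_cons]
      refine Finset.sum_congr rfl fun i _ => firstLetterSum_congr (fun u hu Ψ => ?_) _ _ _
      refine ih u.length ?_ Ψ u rfl
      simp only [List.length_drop, List.length_cons] at hu hn
      omega

lemma gaxit_eq_facsSum (B : Mould R G H) (w : List (G × H)) :
    gaxit A₁ A₂ B w = facsSum A₁ A₂ true B w := by
  cases w with
  | nil => rw [facsSum_nil]; rfl
  | cons x xs => rfl

end Flexion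

namespace Flexion

variable {R : Type*} [CommRing R] [Algebra ℚ R]
variable {G H : Type*} [AddCommGroup G] [AddCommGroup H]

theorem gaxit_simple_general (A₁ A₂ B : Mould R G H) (h₁ : A₁ [] = 1) (h₂ : A₂ [] = 1)
    (w : List (G × H)) :
    gaxit A₁ A₂ B w =
      ((sfacs w).map fun L =>
        B (L.map fun t => (uSum t.1 + t.2.1.1 + uSum t.2.2, t.2.1.2)) *
          (L.map fun t =>
            A₁ (t.1.map fun p => (p.1, p.2 - t.2.1.2)) *
              A₂ (t.2.2.map fun p => (p.1, p.2 - t.2.1.2))).prod).sum :=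
  (gaxit_eq_facsSum B w).trans (facsSum_true_eq_sfacsSum h₁ h₂ B w)

/-- simplified expression of `gaxit` as a sum over factorizations
whose middle blocks are single letters. -/
theorem gaxit_simple (A₁ A₂ B : Mould R G H) (h₁ : A₁ [] = 1) (h₂ : A₂ [] = 1)
    (w : List (G × H)) (hw : w ≠ []) :
    gaxit A₁ A₂ B w =
      ((sfacs w).map fun L =>
        B (L.map fun t => (uSum t.1 + t.2.1.1 + uSum t.2.2, t.2.1.2)) *
          (L.map fun t =>
            A₁ (t.1.map fun p => (p.1, p.2 - t.2.1.2)) *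
              A₂ (t.2.2.map fun p => (p.1, p.2 - t.2.1.2))).prod).sum :=
  gaxit_simple_general A₁ A₂ B h₁ h₂ w

end Flexion
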